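/- Let W⁺ belong to the restricted orthogonal Grassmannian Pol₂^g(H), i.e., W⁺ is an orthogonal polarization such that the orthogonal projection L⁺ → α(W⁺) is Hilbert–Schmidt. Then the orthogonal projection P : W⁺ → L⁺ is a Fredholm operator whose cokernel equals α(ker P); in particular P has Fredholm index zero. -/

import Mathlib

/-- A (bounded) operator on a complex Hilbert space is Hilbert–Schmidt if ∑ ‖T eᵢ‖² converges
for some (equivalently any) Hilbert basis. -/
def IsHilbertSchmidt {E : Type} [NormedAddCommGroup E] [InnerProductSpace ℂ E]
    (T : E →L[ℂ] E) : Prop :=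
  ∃ (ι : Type) (b : HilbertBasis ι ℂ E), Summable fun i => ‖T (b i)‖ ^ 2

/-- P is the orthogonal projection of E onto the set S. -/
def IsOrthProjOn {E : Type} [NormedAddCommGroup E] [InnerProductSpace ℂ E]
    (S : Set E) (P : E →L[ℂ] E) : Prop :=
  (∀ x, P x ∈ S) ∧ (∀ x ∈ S, P x = x) ∧ (∀ x, ∀ s ∈ S, (inner ℂ (x - P x) s : ℂ) = 0)

/-!
Let `P` and `Q` be the orthogonal projections onto `L⁺` and onto `α(W⁺) = W⁺ᗮ`. Since `α`
exchanges `L⁺` and `L⁻ = L⁺ᗮ`, we have `α P α = 1 - P`, and since `Q α x = α x` for `x ∈ W⁺`, this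
says `P x + α P Q α x = x` on `W⁺`. The operator `PQ = (QP)*` is compact because `QP` is
Hilbert–Schmidt, so on `W⁺` the projection `P` is the identity minus a compact operator: its kernel
is finite-dimensional and its range is closed. A vector of `L⁺` is orthogonal to `P W⁺` iff it is
orthogonal to `W⁺`, so the cokernel is `L⁺ ∩ α(W⁺) = α(W⁺ ∩ L⁻) = α(ker P)`, which has the
dimension of `ker P` because `α` is a conjugate-linear bijection.
-/

open Filter Topology InnerProductSpace ContinuousLinearMap

lemma Real.tsum_mul_le_sqrt_mul_sqrt {ι : Type*} {f g : ι → ℝ} (hf₀ : ∀ i, 0 ≤ f i)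
    (hg₀ : ∀ i, 0 ≤ g i) (hf : Summable fun i ↦ f i ^ 2) (hg : Summable fun i ↦ g i ^ 2) :
    Summable (fun i ↦ f i * g i) ∧ ∑' i, f i * g i ≤ √(∑' i, f i ^ 2) * √(∑' i, g i ^ 2) := by
  simpa [Real.rpow_two, Real.sqrt_eq_rpow] using
    Real.summable_and_inner_le_Lp_mul_Lq_tsum_of_nonneg .two_two hf₀ hg₀
      (by simpa [Real.rpow_two] using hf) (by simpa [Real.rpow_two] using hg)

lemma isCompactOperator_rankOne {𝕜 E F : Type*} [RCLike 𝕜] [NormedAddCommGroup E]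
    [InnerProductSpace 𝕜 E] [NormedAddCommGroup F] [NormedSpace 𝕜 F] (x : F) (y : E) :
    IsCompactOperator (rankOne 𝕜 x y) :=
  (isCompactOperator_of_locallyCompactSpace_dom (innerSL 𝕜 y)).clm_comp (toSpanSingleton 𝕜 x)

namespace HilbertBasis

variable {𝕜 E ι : Type*} [RCLike 𝕜] [NormedAddCommGroup E] [InnerProductSpace 𝕜 E]
  (b : HilbertBasis ι 𝕜 E) (T : E →L[𝕜] E)

noncomputable def truncation (F : Finset ι) : E →L[𝕜] E :=
  ∑ i ∈ F, rankOne 𝕜 (T (b i)) (b i)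

lemma truncation_apply (F : Finset ι) (x : E) :
    b.truncation T F x = ∑ i ∈ F, inner 𝕜 (b i) x • T (b i) := by
  simp [truncation]

lemma norm_apply_sub_truncation_apply_le (hT : Summable fun i ↦ ‖T (b i)‖ ^ 2)
    (F : Finset ι) (x : E) :
    ‖T x - b.truncation T F x‖ ≤ √(∑' i : {i // i ∉ F}, ‖T (b i)‖ ^ 2) * ‖x‖ := by
  set c : ι → 𝕜 := fun i ↦ inner 𝕜 (b i) x
  have hTx : HasSum (fun i ↦ c i • T (b i)) (T x) := by
    simpa only [b.repr_apply_apply, map_smul] using (b.hasSum_repr x).mapL T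
  have htail : HasSum (fun i : {i // i ∉ F} ↦ c i • T (b i)) (T x - b.truncation T F x) := by
    refine (Finset.hasSum_compl_iff (f := fun i ↦ c i • T (b i)) F).2 ?_
    rwa [truncation_apply, sub_add_cancel]
  have hb : Orthonormal 𝕜 fun i : {i // i ∉ F} ↦ b i := b.orthonormal.comp _ Subtype.val_injective
  obtain ⟨hsum, hCS⟩ := Real.tsum_mul_le_sqrt_mul_sqrt (fun i ↦ norm_nonneg _)
    (fun i ↦ norm_nonneg _) (hb.inner_products_summable x) (hT.subtype _)
  calc ‖T x - b.truncation T F x‖ = ‖∑' i : {i // i ∉ F}, c i • T (b i)‖ := by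
        rw [htail.tsum_eq]
    _ ≤ ∑' i : {i // i ∉ F}, ‖c i‖ * ‖T (b i)‖ := by
        simpa only [norm_smul] using
          norm_tsum_le_tsum_norm (f := fun i : {i // i ∉ F} ↦ c i • T (b i))
            (by simpa only [norm_smul] using hsum)
    _ ≤ √(∑' i : {i // i ∉ F}, ‖c i‖ ^ 2) * √(∑' i : {i // i ∉ F}, ‖T (b i)‖ ^ 2) := hCS
    _ ≤ ‖x‖ * √(∑' i : {i // i ∉ F}, ‖T (b i)‖ ^ 2) := by
        gcongr
        exact (Real.sqrt_le_sqrt (hb.tsum_inner_products_le x)).trans_eq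
          (Real.sqrt_sq (norm_nonneg x))
    _ = _ := mul_comm _ _

lemma tendsto_truncation (hT : Summable fun i ↦ ‖T (b i)‖ ^ 2) :
    Tendsto (b.truncation T) atTop (𝓝 T) := by
  have htail : Tendsto (fun F : Finset ι ↦ √(∑' i : {i // i ∉ F}, ‖T (b i)‖ ^ 2)) atTop (𝓝 0) := by
    simpa using (tendsto_tsum_compl_atTop_zero fun i ↦ ‖T (b i)‖ ^ 2).sqrt
  rw [tendsto_iff_norm_sub_tendsto_zero]
  refine squeeze_zero (fun _ ↦ norm_nonneg _) (fun F ↦ ?_) htail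
  rw [norm_sub_rev]
  exact opNorm_le_bound _ (Real.sqrt_nonneg _) (b.norm_apply_sub_truncation_apply_le T hT F)

lemma isCompactOperator_adjoint_truncation [CompleteSpace E] (F : Finset ι) :
    IsCompactOperator (adjoint (b.truncation T F)) := by
  simp only [truncation, map_sum, adjoint_rankOne]
  exact Submodule.sum_mem (compactOperator _ E E) fun i _ ↦ isCompactOperator_rankOne _ _

end HilbertBasis

theorem IsHilbertSchmidt.isCompactOperator_adjoint {E : Type} [NormedAddCommGroup E]
    [InnerProductSpace ℂ E] [CompleteSpace E] {T : E →L[ℂ] E} (hT : IsHilbertSchmidt T) :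
    IsCompactOperator (adjoint T) := by
  obtain ⟨ι, b, hb⟩ := hT
  exact isCompactOperator_of_tendsto
    ((adjoint.continuous.tendsto T).comp (b.tendsto_truncation T hb))
    (Eventually.of_forall (b.isCompactOperator_adjoint_truncation T))

section CompactPerturbation

variable {𝕜 E : Type*} [RCLike 𝕜]

section NormedSpace

variable [NormedAddCommGroup E] [NormedSpace 𝕜 E]

lemma exists_seq_norm_eq_one_tendsto_zero {F : Type*} [NormedAddCommGroup F] [NormedSpace 𝕜 F]
    {M : Submodule 𝕜 E} (f : E →L[𝕜] F)
    (h : ¬ ∃ c > 0, ∀ x ∈ M, c * ‖x‖ ≤ ‖f x‖) :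
    ∃ u : ℕ → E, (∀ n, u n ∈ M) ∧ (∀ n, ‖u n‖ = 1) ∧ Tendsto (fun n ↦ f (u n)) atTop (𝓝 0) := by
  push Not at h
  choose x hxM hx using fun n : ℕ ↦ h (1 / (n + 1)) Nat.one_div_pos_of_nat
  have hx0 : ∀ n, x n ≠ 0 := fun n h0 ↦ by simpa [h0] using hx n
  refine ⟨fun n ↦ (‖x n‖⁻¹ : 𝕜) • x n, fun n ↦ M.smul_mem _ (hxM n),
    fun n ↦ norm_smul_inv_norm (hx0 n), squeeze_zero_norm (fun n ↦ ?_)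
      tendsto_one_div_add_atTop_nhds_zero_nat⟩
  rw [map_smul, norm_smul, norm_inv, RCLike.norm_ofReal, abs_norm,
    inv_mul_le_iff₀ (norm_pos_iff.mpr (hx0 n)), mul_comm]
  exact (hx n).le

variable {W : Submodule 𝕜 E} {A C : E →L[𝕜] E}

theorem finiteDimensional_inf_ker_of_add_eq_self (hW : IsClosed (W : Set E))
    (hC : IsCompactOperator C) (hAC : ∀ x ∈ W, A x + C x = x) :
    FiniteDimensional 𝕜 ↥(W ⊓ LinearMap.ker (A : E →ₗ[𝕜] E)) := by
  set N := W ⊓ LinearMap.ker (A : E →ₗ[𝕜] E)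
  have hCN : ∀ x ∈ N, C x = x := fun x hx ↦ by
    have hAx : A x = 0 := hx.2
    simpa [hAx] using hAC x hx.1
  have hN : IsClosed (N : Set E) := hW.inter A.isClosed_ker
  have hCmaps : ∀ x ∈ N, C x ∈ N := fun x hx ↦ (hCN x hx).symm ▸ hx
  have hid : (C : E →ₗ[𝕜] E).restrict hCmaps = LinearMap.id :=
    LinearMap.ext fun x ↦ Subtype.ext (hCN x x.2)
  have hcpt := hC.restrict hCmaps hN
  rw [hid] at hcpt
  exact FiniteDimensional.of_isCompactOperator_id hcpt

end NormedSpace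

variable [NormedAddCommGroup E] [InnerProductSpace 𝕜 E] {W : Submodule 𝕜 E} {A C : E →L[𝕜] E}

theorem exists_pos_mul_norm_le_of_add_eq_self (hW : IsClosed (W : Set E))
    (hC : IsCompactOperator C) (hAC : ∀ x ∈ W, A x + C x = x) :
    ∃ c > 0, ∀ x ∈ (W ⊓ LinearMap.ker (A : E →ₗ[𝕜] E))ᗮ ⊓ W, c * ‖x‖ ≤ ‖A x‖ := by
  set N := W ⊓ LinearMap.ker (A : E →ₗ[𝕜] E)
  by_contra h
  obtain ⟨u, huM, hu1, hAu⟩ := exists_seq_norm_eq_one_tendsto_zero A h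
  obtain ⟨K, hK, hCK⟩ := hC.image_closedBall_subset_compact 1
  obtain ⟨z, -, φ, hφ, hCz⟩ := hK.tendsto_subseq (x := fun n ↦ C (u n))
    fun n ↦ hCK ⟨u n, by simp [hu1], rfl⟩
  have hAuφ := hAu.comp hφ.tendsto_atTop
  have hu_lim : Tendsto (u ∘ φ) atTop (𝓝 z) := by
    have := hAuφ.add hCz
    rw [zero_add] at this
    exact this.congr fun n ↦ hAC _ (huM _).2
  have hzM : z ∈ Nᗮ ⊓ W := (N.isClosed_orthogonal.inter hW).mem_of_tendsto hu_lim
    (Eventually.of_forall fun n ↦ huM _)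
  have hz1 : ‖z‖ = 1 := tendsto_nhds_unique hu_lim.norm (by simp [hu1])
  have hAz : A z = 0 := tendsto_nhds_unique ((A.continuous.tendsto z).comp hu_lim) hAuφ
  have hz0 : z = 0 := inner_self_eq_zero.mp ((N.mem_orthogonal z).mp hzM.1 z ⟨hzM.2, hAz⟩)
  simp [hz0] at hz1

theorem isClosed_map_of_add_eq_self [CompleteSpace E] (hW : IsClosed (W : Set E))
    (hC : IsCompactOperator C) (hAC : ∀ x ∈ W, A x + C x = x) :
    IsClosed (W.map (A : E →ₗ[𝕜] E) : Set E) := by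
  have := finiteDimensional_inf_ker_of_add_eq_self hW hC hAC
  set N := W ⊓ LinearMap.ker (A : E →ₗ[𝕜] E)
  set M := Nᗮ ⊓ W
  have hmap : W.map (A : E →ₗ[𝕜] E) = M.map (A : E →ₗ[𝕜] E) := by
    conv_lhs => rw [← Submodule.sup_orthogonal_inf_of_hasOrthogonalProjection (inf_le_left : N ≤ W)]
    rw [Submodule.map_sup, LinearMap.le_ker_iff_map.mp inf_le_right, bot_sup_eq]
  obtain ⟨c, hc, hAc⟩ := exists_pos_mul_norm_le_of_add_eq_self hW hC hAC
  obtain ⟨K, hK⟩ := (antilipschitzWith_iff_exists_mul_le_norm (f := A ∘L M.subtypeL)).mpr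
    ⟨c, hc, fun x ↦ hAc x x.2⟩
  have : CompleteSpace M := (N.isClosed_orthogonal.inter hW).completeSpace_coe
  rw [hmap, ← M.range_subtype, ← LinearMap.range_comp]
  exact hK.isClosed_range (A ∘L M.subtypeL).uniformContinuous

end CompactPerturbation

section Polarization

variable {𝕜 E : Type*} [RCLike 𝕜] [NormedAddCommGroup E] [InnerProductSpace 𝕜 E]

noncomputable def LinearIsometryEquiv.ofInvolutiveOfInner (α : E → E)
    (hadd : ∀ x y, α (x + y) = α x + α y)
    (hsmul : ∀ (c : 𝕜) (x : E), α (c • x) = starRingEnd 𝕜 c • α x)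
    (hinv : Function.Involutive α) (hinner : ∀ x y, inner 𝕜 (α x) (α y) = inner 𝕜 y x) :
    E ≃ₗᵢ⋆[𝕜] E where
  toFun := α
  invFun := α
  map_add' := hadd
  map_smul' := hsmul
  left_inv := hinv
  right_inv := hinv
  norm_map' x := by
    change ‖α x‖ = ‖x‖
    rw [@norm_eq_sqrt_re_inner 𝕜, @norm_eq_sqrt_re_inner 𝕜 _ _ _ _ x, hinner]

def Submodule.IsPolarization (α : E ≃ₗᵢ⋆[𝕜] E) (W : Submodule 𝕜 E) : Prop :=
  W.map (α : E →ₗ⋆[𝕜] E) = Wᗮ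

namespace Submodule.IsPolarization

variable {α : E ≃ₗᵢ⋆[𝕜] E} {W : Submodule 𝕜 E}

lemma of_inner_eq_zero_of_eq_add (horth : ∀ x ∈ W, ∀ y ∈ W, inner 𝕜 x (α y) = 0)
    (hspan : ∀ z, ∃ x ∈ W, ∃ y ∈ W, z = x + α y) : W.IsPolarization α := by
  refine le_antisymm ?_ fun z hz ↦ ?_
  · rintro _ ⟨y, hy, rfl⟩
    exact (W.mem_orthogonal _).mpr fun x hx ↦ horth x hx y hy
  · obtain ⟨x, hx, y, hy, rfl⟩ := hspan z
    have hx0 : x = 0 := by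
      have := (W.mem_orthogonal _).mp hz x hx
      rwa [inner_add_right, horth x hx y hy, add_zero, inner_self_eq_zero] at this
    exact ⟨y, hy, by rw [hx0, zero_add]; rfl⟩

lemma apply_mem_orthogonal (hW : W.IsPolarization α) {x : E} (hx : x ∈ W) : α x ∈ Wᗮ := by
  rw [← hW]
  exact mem_map_of_mem hx

variable (hα : Function.Involutive α)
include hα

lemma map_orthogonal (hW : W.IsPolarization α) : Wᗮ.map (α : E →ₗ⋆[𝕜] E) = W := by
  rw [← hW]
  ext x
  refine ⟨?_, fun hx ↦ ⟨α x, mem_map_of_mem hx, hα x⟩⟩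
  rintro ⟨_, ⟨y, hy, rfl⟩, rfl⟩
  change α (α y) ∈ W
  rwa [hα y]

lemma apply_mem_of_mem_orthogonal (hW : W.IsPolarization α) {x : E} (hx : x ∈ Wᗮ) : α x ∈ W :=
  hW.map_orthogonal hα ▸ mem_map_of_mem (f := (α : E →ₗ⋆[𝕜] E)) hx

lemma starProjection_apply (hW : W.IsPolarization α) [W.HasOrthogonalProjection] (x : E) :
    W.starProjection (α x) = α (x - W.starProjection x) :=
  eq_starProjection_of_mem_orthogonal'
    (hW.apply_mem_of_mem_orthogonal hα (sub_starProjection_mem_orthogonal x))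
    (hW.apply_mem_orthogonal (W.starProjection_apply_mem x))
    (by rw [← map_add, sub_add_cancel])

lemma starProjection_add_conj_eq_self {L : Submodule 𝕜 E} (hL : L.IsPolarization α)
    (hW : W.IsPolarization α) [L.HasOrthogonalProjection] [Wᗮ.HasOrthogonalProjection]
    {x : E} (hx : x ∈ W) :
    L.starProjection x + α (L.starProjection (Wᗮ.starProjection (α x))) = x := by
  rw [starProjection_eq_self_iff.mpr (hW.apply_mem_orthogonal hx), hL.starProjection_apply hα, hα,
    add_sub_cancel]

lemma exists_isCompactOperator_starProjection_add_eq_self {L : Submodule 𝕜 E}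
    (hL : L.IsPolarization α) (hW : W.IsPolarization α) [L.HasOrthogonalProjection]
    [Wᗮ.HasOrthogonalProjection]
    (hPQ : IsCompactOperator (L.starProjection ∘L Wᗮ.starProjection)) :
    ∃ C : E →L[𝕜] E, IsCompactOperator C ∧ ∀ x ∈ W, L.starProjection x + C x = x := by
  let αC : E →SL[starRingEnd 𝕜] E := α
  exact ⟨αC ∘SL (L.starProjection ∘L Wᗮ.starProjection) ∘SL αC, (hPQ.comp_clm αC).clm_comp αC,
    fun x hx ↦ hL.starProjection_add_conj_eq_self hα hW hx⟩

lemma inf_orthogonal_eq_map {L : Submodule 𝕜 E} (hL : L.IsPolarization α)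
    (hW : W.IsPolarization α) : L ⊓ Wᗮ = (W ⊓ Lᗮ).map (α : E →ₗ⋆[𝕜] E) := by
  rw [Submodule.map_inf (α : E →ₗ⋆[𝕜] E) α.injective, ← hW, hL.map_orthogonal hα, inf_comm]

end Submodule.IsPolarization

lemma Submodule.inf_orthogonal_map_starProjection (K W : Submodule 𝕜 E)
    [K.HasOrthogonalProjection] :
    K ⊓ (W.map (K.starProjection : E →ₗ[𝕜] E))ᗮ = K ⊓ Wᗮ := by
  ext y
  simp only [mem_inf, and_congr_right_iff, mem_orthogonal, mem_map, forall_exists_index, and_imp,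
    forall_apply_eq_imp_iff₂]
  intro hy
  simp [K.inner_starProjection_left_eq_right, (K.starProjection_eq_self_iff).mpr hy]

lemma Submodule.finrank_map_linearIsometryEquiv (α : E ≃ₗᵢ⋆[𝕜] E) (W : Submodule 𝕜 E) :
    Module.finrank 𝕜 (W.map (α : E →ₗ⋆[𝕜] E)) = Module.finrank 𝕜 W :=
  congrArg Cardinal.toNat <| (rank_eq_of_equiv_equiv (starRingEnd 𝕜)
    (α.toLinearEquiv.submoduleMap W).toAddEquiv star_involutive.bijective
    (map_smulₛₗ (α.toLinearEquiv.submoduleMap W))).symm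

end Polarization

section ComplexStructure

variable {E : Type*} [NormedAddCommGroup E] [InnerProductSpace ℂ E] (J : E →L[ℂ] E)

lemma mem_ker_sub_smul_one_iff {c : ℂ} {x : E} :
    x ∈ LinearMap.ker ((J - c • 1 : E →L[ℂ] E) : E →ₗ[ℂ] E) ↔ J x = c • x := by
  simp [sub_eq_zero]

lemma ker_sub_neg_I_smul_one_le_orthogonal
    (hJskew : ∀ x y, inner ℂ (J x) y = -inner ℂ x (J y)) :
    LinearMap.ker ((J - (-Complex.I) • 1 : E →L[ℂ] E) : E →ₗ[ℂ] E) ≤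
      (LinearMap.ker ((J - Complex.I • 1 : E →L[ℂ] E) : E →ₗ[ℂ] E))ᗮ := by
  intro v hv
  refine (Submodule.mem_orthogonal _ v).mpr fun u hu ↦ ?_
  have h := hJskew u v
  rw [(mem_ker_sub_smul_one_iff J).mp hu, (mem_ker_sub_smul_one_iff J).mp hv, inner_smul_left,
    inner_smul_right, Complex.conj_I] at h
  have h2 : (2 * Complex.I) * inner ℂ u v = 0 := by linear_combination -h
  exact (mul_eq_zero.mp h2).resolve_left (by simp)

lemma orthogonal_ker_sub_I_smul_one (hJJ : ∀ x, J (J x) = -x)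
    (hJskew : ∀ x y, inner ℂ (J x) y = -inner ℂ x (J y)) :
    (LinearMap.ker ((J - Complex.I • 1 : E →L[ℂ] E) : E →ₗ[ℂ] E))ᗮ =
      LinearMap.ker ((J - (-Complex.I) • 1 : E →L[ℂ] E) : E →ₗ[ℂ] E) := by
  set L := LinearMap.ker ((J - Complex.I • 1 : E →L[ℂ] E) : E →ₗ[ℂ] E)
  have hle := ker_sub_neg_I_smul_one_le_orthogonal J hJskew
  refine le_antisymm (fun y hy ↦ ?_) hle
  set a := y - Complex.I • J y
  have haL : a ∈ L := by
    rw [mem_ker_sub_smul_one_iff]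
    simp only [a, map_sub, map_smul, hJJ, smul_sub, smul_neg, smul_smul, Complex.I_mul_I]
    module
  have hb : y + Complex.I • J y ∈ Lᗮ := by
    refine hle ((mem_ker_sub_smul_one_iff J).mpr ?_)
    simp only [map_add, map_smul, hJJ, smul_add, smul_neg, smul_smul, neg_mul, Complex.I_mul_I]
    module
  have ha0 : a = 0 := by
    refine inner_self_eq_zero.mp ((L.mem_orthogonal a).mp ?_ a haL)
    rw [show a = (2 : ℂ) • y - (y + Complex.I • J y) by module]
    exact Lᗮ.sub_mem (Lᗮ.smul_mem _ hy) hb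
  rw [mem_ker_sub_smul_one_iff]
  conv_lhs => rw [sub_eq_zero.mp ha0]
  rw [map_smul, hJJ, smul_neg, neg_smul]

variable {J} (α : E ≃ₗᵢ⋆[ℂ] E) (hJα : ∀ x, J (α x) = α (J x))
include hJα

lemma apply_mem_ker_sub_smul_one {c : ℂ} {x : E}
    (hx : x ∈ LinearMap.ker ((J - c • 1 : E →L[ℂ] E) : E →ₗ[ℂ] E)) :
    α x ∈ LinearMap.ker ((J - starRingEnd ℂ c • 1 : E →L[ℂ] E) : E →ₗ[ℂ] E) := by
  rw [mem_ker_sub_smul_one_iff] at hx ⊢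
  rw [hJα, hx, map_smulₛₗ]

lemma map_ker_sub_I_smul_one (hα : Function.Involutive α) :
    (LinearMap.ker ((J - Complex.I • 1 : E →L[ℂ] E) : E →ₗ[ℂ] E)).map (α : E →ₗ⋆[ℂ] E) =
      LinearMap.ker ((J - (-Complex.I) • 1 : E →L[ℂ] E) : E →ₗ[ℂ] E) := by
  refine le_antisymm ?_ fun y hy ↦ ⟨α y, ?_, hα y⟩
  · rintro _ ⟨x, hx, rfl⟩
    simpa using apply_mem_ker_sub_smul_one α hJα hx
  · simpa using apply_mem_ker_sub_smul_one α hJα hy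

lemma isPolarization_ker_sub_I_smul_one (hα : Function.Involutive α) (hJJ : ∀ x, J (J x) = -x)
    (hJskew : ∀ x y, inner ℂ (J x) y = -inner ℂ x (J y)) :
    (LinearMap.ker ((J - Complex.I • 1 : E →L[ℂ] E) : E →ₗ[ℂ] E)).IsPolarization α := by
  rw [Submodule.IsPolarization, map_ker_sub_I_smul_one α hJα hα,
    orthogonal_ker_sub_I_smul_one J hJJ hJskew]

end ComplexStructure

section OrthProj

variable {E : Type} [NormedAddCommGroup E] [InnerProductSpace ℂ E]

lemma IsOrthProjOn.eq_starProjection {K : Submodule ℂ E} [K.HasOrthogonalProjection]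
    {P : E →L[ℂ] E} (h : IsOrthProjOn K P) : P = K.starProjection :=
  ext fun x ↦ (Submodule.eq_starProjection_of_mem_of_inner_eq_zero (h.1 x) (h.2.2 x)).symm

lemma isOrthProjOn_starProjection (K : Submodule ℂ E) [K.HasOrthogonalProjection] :
    IsOrthProjOn K K.starProjection :=
  ⟨K.starProjection_apply_mem, fun _ hx ↦ Submodule.starProjection_eq_self_iff.mpr hx,
    Submodule.starProjection_inner_eq_zero⟩

end OrthProj

/-- If W⁺ is an orthogonal polarization in the restricted Grassmannian Pol₂^g(H) (i.e. the
orthogonal projection L⁺ → α(W⁺) is Hilbert–Schmidt), then the orthogonal projection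
P : W⁺ → L⁺ is Fredholm: its kernel is finite-dimensional, its range is closed, its cokernel
(the orthogonal complement of its range in L⁺) equals α(ker P), and hence its index is zero. -/
theorem restricted_grassmannian_projection_fredholm_index_zero {E : Type}
    [NormedAddCommGroup E] [InnerProductSpace ℂ E] [CompleteSpace E]
    (α : E → E) (J : E →L[ℂ] E)
    (hα_add : ∀ x y, α (x + y) = α x + α y)
    (hα_smul : ∀ (c : ℂ) (x : E), α (c • x) = (starRingEnd ℂ) c • α x)
    (hα_invol : ∀ x, α (α x) = x)
    (hα_inner : ∀ x y, (inner ℂ (α x) (α y) : ℂ) = (inner ℂ y x : ℂ))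
    (hJJ : ∀ x, J (J x) = -x)
    (hJα : ∀ x, J (α x) = α (J x))
    (hJskew : ∀ x y, (inner ℂ (J x) y : ℂ) = - (inner ℂ x (J y) : ℂ))
    (Wp : Submodule ℂ E)
    (hWp_closed : IsClosed (Wp : Set E))
    (hWp_orth : ∀ x ∈ Wp, ∀ y ∈ Wp, (inner ℂ x (α y) : ℂ) = 0)
    (hWp_span : ∀ z : E, ∃ x ∈ Wp, ∃ y ∈ Wp, z = x + α y)
    (hHS : ∀ P Q : E →L[ℂ] E,
      IsOrthProjOn ((LinearMap.ker ((J - Complex.I • (1 : E →L[ℂ] E) : E →L[ℂ] E) : E →ₗ[ℂ] E) : Submodule ℂ E) : Set E) P →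
      IsOrthProjOn (α '' (Wp : Set E)) Q → IsHilbertSchmidt (Q.comp P))
    (Pp : E →L[ℂ] E)
    (hPp : IsOrthProjOn
      ((LinearMap.ker ((J - Complex.I • (1 : E →L[ℂ] E) : E →L[ℂ] E) : E →ₗ[ℂ] E) : Submodule ℂ E) : Set E) Pp) :
    FiniteDimensional ℂ ↥(Wp ⊓ LinearMap.ker (Pp : E →ₗ[ℂ] E)) ∧
    IsClosed ((Submodule.map (Pp : E →ₗ[ℂ] E) Wp : Submodule ℂ E) : Set E) ∧
    ({y : E | y ∈ LinearMap.ker ((J - Complex.I • (1 : E →L[ℂ] E) : E →L[ℂ] E) : E →ₗ[ℂ] E) ∧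
        ∀ r ∈ Submodule.map (Pp : E →ₗ[ℂ] E) Wp, (inner ℂ r y : ℂ) = 0}
      = α '' ((Wp ⊓ LinearMap.ker (Pp : E →ₗ[ℂ] E) : Submodule ℂ E) : Set E)) ∧
    Module.finrank ℂ ↥(Wp ⊓ LinearMap.ker (Pp : E →ₗ[ℂ] E)) =
      Module.finrank ℂ
        ↥(LinearMap.ker ((J - Complex.I • (1 : E →L[ℂ] E) : E →L[ℂ] E) : E →ₗ[ℂ] E) ⊓ (Submodule.map (Pp : E →ₗ[ℂ] E) Wp)ᗮ) := by
  set L := LinearMap.ker ((J - Complex.I • (1 : E →L[ℂ] E) : E →L[ℂ] E) : E →ₗ[ℂ] E)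
  let αL := LinearIsometryEquiv.ofInvolutiveOfInner α hα_add hα_smul hα_invol hα_inner
  have hαL : Function.Involutive αL := hα_invol
  have hL : L.IsPolarization αL := isPolarization_ker_sub_I_smul_one αL hJα hα_invol hJJ hJskew
  have hW : Wp.IsPolarization αL := .of_inner_eq_zero_of_eq_add hWp_orth hWp_span
  have : CompleteSpace L := (J - Complex.I • 1).isClosed_ker.completeSpace_coe
  obtain rfl := hPp.eq_starProjection
  have hQ : IsOrthProjOn (α '' Wp) Wpᗮ.starProjection := by
    have hset : α '' Wp = (Wpᗮ : Set E) := by rw [← hW, Submodule.map_coe]; rfl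
    exact hset ▸ isOrthProjOn_starProjection _
  have hPQ : IsCompactOperator (L.starProjection ∘L Wpᗮ.starProjection) := by
    simpa [adjoint_comp, (isSelfAdjoint_starProjection _).adjoint_eq] using
      (hHS _ _ hPp hQ).isCompactOperator_adjoint
  obtain ⟨C, hC, hAC⟩ := hL.exists_isCompactOperator_starProjection_add_eq_self hαL hW hPQ
  have hcoker : L ⊓ (Wp.map (L.starProjection : E →ₗ[ℂ] E))ᗮ =
      (Wp ⊓ LinearMap.ker (L.starProjection : E →ₗ[ℂ] E)).map (αL : E →ₗ⋆[ℂ] E) := by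
    rw [L.inf_orthogonal_map_starProjection, hL.inf_orthogonal_eq_map hαL hW,
      L.ker_starProjection]
  refine ⟨finiteDimensional_inf_ker_of_add_eq_self hWp_closed hC hAC,
    isClosed_map_of_add_eq_self hWp_closed hC hAC, ?_, ?_⟩
  · change ((L ⊓ (Wp.map (L.starProjection : E →ₗ[ℂ] E))ᗮ : Submodule ℂ E) : Set E) =
      (αL : E →ₗ⋆[ℂ] E) '' _
    rw [hcoker, Submodule.map_coe]
  · rw [hcoker, Submodule.finrank_map_linearIsometryEquiv]
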